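/- With the same hypotheses, the tangential-normal components of the Hessian of the torsion function satisfy (∇²U(F(ξ)) e_i)·ξ = -κ·Σ_j |∇U(F(ξ))|_j·c_{ij}(ξ), where |∇U(F(·))|_j denotes the j-th covariant derivative on S^(n-1) of the function ξ ↦ |∇U(F(ξ))|. -/

import Mathlib

/-!
On the unit sphere the support function `h` has gradient `F`; as `F` is `0`-homogeneous, its
differential at `ξ` annihilates `ξ` and sends `e j` to `∑ k, W j k • e k`. Differentiating
`U ∘ F = 0` and inverting `W` shows that `∇U(F ξ)` is normal, `∇U(F ξ) = c • ξ`, and `c ≤ 0`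
because `U ≥ 0` on `Ω` by the minimum principle. Hence `|∇U(F ·)|` has differential
`-⟪ξ, D(∇U ∘ F) ·⟫` (for `c = 0` because a norm that is differentiable at a zero of `∇U ∘ F`
forces `D(∇U ∘ F) = 0` there), which in the frame reads
`|∇U(F)|_j = -∑ k, W j k * ∇²U(F ξ)(e k, ξ)`; multiplying by the adjugate of `W` solves for the
Hessian entries.
-/

open scoped InnerProductSpace
open Filter Topology Matrix

/-- The Euclidean Laplacian, as the sum of second derivatives in coordinate directions. -/
noncomputable def lap {n : ℕ} (f : EuclideanSpace ℝ (Fin n) → ℝ)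
    (x : EuclideanSpace ℝ (Fin n)) : ℝ :=
  ∑ i : Fin n, fderiv ℝ (fun y => fderiv ℝ f y (EuclideanSpace.single i 1)) x
    (EuclideanSpace.single i 1)

theorem IsLocalMin.deriv_deriv_nonneg {f : ℝ → ℝ} {x₀ : ℝ} (hmin : IsLocalMin f x₀)
    (hc : ContinuousAt f x₀) : 0 ≤ deriv (deriv f) x₀ := by
  by_contra! hneg
  -- the second derivative test makes `x₀` also a local maximum, so `f` is locally constant
  have hmax := isLocalMax_of_deriv_deriv_neg hneg hmin.deriv_eq_zero hc
  have hconst : f =ᶠ[𝓝 x₀] fun _ => f x₀ :=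
    (hmin.and hmax).mono fun x hx => le_antisymm hx.2 hx.1
  rw [hconst.deriv.deriv_eq, deriv_const', deriv_const] at hneg
  exact lt_irrefl _ hneg

section NormedSpace

variable {E : Type*} [NormedAddCommGroup E] [NormedSpace ℝ E]

theorem deriv_deriv_comp_add_smul {U : E → ℝ} (hU : ContDiff ℝ 2 U) (x v : E) :
    deriv (deriv fun t : ℝ => U (x + t • v)) 0 = fderiv ℝ (fun y => fderiv ℝ U y v) x v := by
  have hline : ∀ t : ℝ, HasDerivAt (fun s : ℝ => x + s • v) v t := fun t => by
    simpa using ((hasDerivAt_id t).smul_const v).const_add x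
  have hderiv : deriv (fun t : ℝ => U (x + t • v)) = fun t => fderiv ℝ U (x + t • v) v :=
    funext fun t =>
      (((hU.differentiable two_ne_zero) _).hasFDerivAt.comp_hasDerivAt t (hline t)).deriv
  have hU' : DifferentiableAt ℝ (fun y => fderiv ℝ U y v) (x + (0 : ℝ) • v) :=
    ((hU.fderiv_right le_rfl).differentiable one_ne_zero _).clm_apply
      (differentiableAt_const v)
  rw [hderiv]
  simpa [Function.comp_def] using (hU'.hasFDerivAt.comp_hasDerivAt 0 (hline 0)).deriv

theorem HasFDerivAt.apply_self_eq_zero_of_smul_invariant {F : Type*} [NormedAddCommGroup F]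
    [NormedSpace ℝ F] {f : E → F} {f' : E →L[ℝ] F} {x : E} (hf : HasFDerivAt f f' x)
    (hinv : ∀ a : ℝ, 0 < a → f (a • x) = f x) : f' x = 0 := by
  have hray : HasDerivAt (fun a : ℝ => f (a • x)) (f' x) 1 := by
    have := (hasDerivAt_id (1 : ℝ)).smul_const x
    simp only [id, one_smul] at this
    exact (by simpa using hf : HasFDerivAt f f' ((1 : ℝ) • x)).comp_hasDerivAt 1 this
  have hconst : (fun a : ℝ => f (a • x)) =ᶠ[𝓝 1] fun _ => f x :=
    (eventually_gt_nhds one_pos).mono fun a ha => hinv a ha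
  exact hray.unique ((hasDerivAt_const 1 (f x)).congr_of_eventuallyEq hconst)

theorem iteratedFDeriv_two_comm {f : E → ℝ} {p : E} (hf : ContDiffAt ℝ 2 f p) (u w : E) :
    iteratedFDeriv ℝ 2 f p ![u, w] = iteratedFDeriv ℝ 2 f p ![w, u] := by
  simpa [iteratedFDeriv_two_apply] using (hf.isSymmSndFDerivAt (by simp)).eq u w

end NormedSpace

section InnerProductSpace

variable {E : Type*} [NormedAddCommGroup E] [InnerProductSpace ℝ E]
variable {G : Type*} [NormedAddCommGroup G] [NormedSpace ℝ G]

theorem hasFDerivAt_zero_of_differentiableAt_norm {v : G → E} {x₀ : G} (hv0 : v x₀ = 0)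
    (hnorm : DifferentiableAt ℝ (fun x => ‖v x‖) x₀) : HasFDerivAt v (0 : G →L[ℝ] E) x₀ := by
  have hmin : IsLocalMin (fun x => ‖v x‖) x₀ := Eventually.of_forall fun x => by simp [hv0]
  have h := hmin.fderiv_eq_zero ▸ hnorm.hasFDerivAt
  rw [hasFDerivAt_iff_isLittleO_nhds_zero] at h ⊢
  simpa [hv0] using h

theorem fderiv_norm_apply_of_eq_smul_nonpos {v : G → E} {Dv : G →L[ℝ] E} {x₀ : G} {ξ : E}
    {c : ℝ} (hξ : ‖ξ‖ = 1) (hc : c ≤ 0) (hvx : v x₀ = c • ξ) (hv : HasFDerivAt v Dv x₀)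
    (hnorm : DifferentiableAt ℝ (fun x => ‖v x‖) x₀) (u : G) :
    fderiv ℝ (fun x => ‖v x‖) x₀ u = -⟪ξ, Dv u⟫_ℝ := by
  rcases hc.lt_or_eq with hc | rfl
  · -- differentiate `‖v‖ ^ 2` in two ways
    have hsq := congrArg (· u) ((hnorm.hasFDerivAt.pow 2).unique hv.norm_sq)
    simp [hvx, norm_smul, hξ, abs_of_neg hc] at hsq
    apply mul_left_cancel₀ (mul_ne_zero two_ne_zero hc.ne)
    linarith
  · rw [zero_smul] at hvx
    have hmin : IsLocalMin (fun x => ‖v x‖) x₀ := Eventually.of_forall fun x => by simp [hvx]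
    rw [← (hasFDerivAt_zero_of_differentiableAt_norm hvx hnorm).unique hv, hmin.fderiv_eq_zero]
    simp

theorem Orthonormal.eq_inner_smul_add_sum [FiniteDimensional ℝ E] {ι : Type*} [Fintype ι]
    {e : ι → E} (he : Orthonormal ℝ e) {ξ : E} (hξ : ‖ξ‖ = 1) (heξ : ∀ i, ⟪e i, ξ⟫_ℝ = 0)
    (hcard : Fintype.card ι + 1 = Module.finrank ℝ E) (w : E) :
    w = ⟪ξ, w⟫_ℝ • ξ + ∑ i, ⟪e i, w⟫_ℝ • e i := by
  classical
  let f : ι ⊕ Unit → E := Sum.elim e fun _ => ξ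
  have hf : Orthonormal ℝ f := by
    rw [orthonormal_iff_ite]
    rintro (i | _) (j | _)
    · simpa [f] using orthonormal_iff_ite.mp he i j
    · simpa [f] using heξ i
    · simpa [f, real_inner_comm] using heξ j
    · simp [f, hξ]
  have hcard' : Fintype.card (ι ⊕ Unit) = Module.finrank ℝ E := by simpa using hcard
  let b := (basisOfOrthonormalOfCardEqFinrank hf hcard').toOrthonormalBasis
    (by rwa [coe_basisOfOrthonormalOfCardEqFinrank])
  have hb : ⇑b = f := by
    simp only [b, Module.Basis.coe_toOrthonormalBasis, coe_basisOfOrthonormalOfCardEqFinrank]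
  have := b.sum_repr' w
  rw [Fintype.sum_sum_type, hb] at this
  simpa [f, add_comm] using this.symm

theorem inner_lt_of_mem_interior {Ω : Set E} {ξ p z : E} (hξ : ξ ≠ 0)
    (hmax : ∀ y ∈ Ω, ⟪ξ, y⟫_ℝ ≤ ⟪ξ, p⟫_ℝ) (hz : z ∈ interior Ω) : ⟪ξ, z⟫_ℝ < ⟪ξ, p⟫_ℝ := by
  refine (hmax z (interior_subset hz)).lt_of_ne fun heq => hξ ?_
  have hlocmax : IsLocalMax (innerSL ℝ ξ) z :=
    mem_of_superset (mem_interior_iff_mem_nhds.1 hz) fun y hy => by simpa [heq] using hmax y hy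
  simpa using congrArg (· ξ) (hlocmax.hasFDerivAt_eq_zero (innerSL ℝ ξ).hasFDerivAt)

variable [CompleteSpace E]

theorem inner_gradient (f : E → ℝ) (x y : E) : ⟪gradient f x, y⟫_ℝ = fderiv ℝ f x y :=
  InnerProductSpace.toDual_symm_apply

theorem ContDiffAt.differentiableAt_gradient {f : E → ℝ} {p : E} (hf : ContDiffAt ℝ 2 f p) :
    DifferentiableAt ℝ (gradient f) p :=
  ((InnerProductSpace.toDual ℝ E).symm.contDiff.contDiffAt.comp p
    (hf.fderiv_right (m := 1) le_rfl)).differentiableAt one_ne_zero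

theorem inner_fderiv_gradient {f : E → ℝ} {p : E} (u w : E) :
    ⟪fderiv ℝ (gradient f) p u, w⟫_ℝ = iteratedFDeriv ℝ 2 f p ![u, w] := by
  have hgrad : gradient f = (InnerProductSpace.toDual ℝ E).symm ∘ fderiv ℝ f := rfl
  rw [hgrad, (InnerProductSpace.toDual ℝ E).symm.comp_fderiv, iteratedFDeriv_two_apply]
  exact InnerProductSpace.toDual_symm_apply

theorem gradient_eq_of_inner_le {f : E → ℝ} {x p : E} (hf : DifferentiableAt ℝ f x)
    (hle : ∀ y, ⟪p, y⟫_ℝ ≤ f y) (heq : f x = ⟪p, x⟫_ℝ) : gradient f x = p := by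
  have hmin : IsLocalMin (fun y => f y - ⟪p, y⟫_ℝ) x :=
    Eventually.of_forall fun y => by simpa [heq] using hle y
  have hzero := hmin.hasFDerivAt_eq_zero (hf.hasFDerivAt.sub (innerSL ℝ p).hasFDerivAt)
  rw [sub_eq_zero] at hzero
  rw [gradient, hzero]
  exact (InnerProductSpace.toDual ℝ E).symm_apply_apply p

theorem nonpos_of_gradient_eq_smul {Ω : Set E} (hΩ : Convex ℝ Ω) {U : E → ℝ} {ξ p z : E}
    {c : ℝ} (hξ : ξ ≠ 0) (hp : p ∈ Ω) (hmax : ∀ y ∈ Ω, ⟪ξ, y⟫_ℝ ≤ ⟪ξ, p⟫_ℝ)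
    (hz : z ∈ interior Ω) (hmin : IsMinOn U Ω p) (hU : DifferentiableAt ℝ U p)
    (hgrad : gradient U p = c • ξ) : c ≤ 0 := by
  have hslope : 0 ≤ fderiv ℝ U p (z - p) :=
    hmin.localize.hasFDerivWithinAt_nonneg hU.hasFDerivAt.hasFDerivWithinAt
      (sub_mem_posTangentConeAt_of_segment_subset (hΩ.segment_subset hp (interior_subset hz)))
  have hinner : ⟪ξ, z - p⟫_ℝ < 0 := by
    rw [inner_sub_right]
    linarith [inner_lt_of_mem_interior hξ hmax hz]
  rw [← inner_gradient, hgrad, real_inner_smul_left] at hslope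
  nlinarith

end InnerProductSpace

theorem Matrix.sum_mulVec_mul_adjugate {ι R : Type*} [Fintype ι] [DecidableEq ι] [CommRing R]
    (W : Matrix ι ι R) (a : ι → R) (i : ι) :
    ∑ j, (W *ᵥ a) j * W.adjugate i j = W.det * a i := by
  have := congrFun (Matrix.mulVec_mulVec a W.adjugate W) i
  rw [Matrix.adjugate_mul, Matrix.smul_mulVec, Matrix.one_mulVec] at this
  simpa [Matrix.mulVec, dotProduct, mul_comm] using this

theorem lap_nonneg_of_isLocalMin {n : ℕ} {U : EuclideanSpace ℝ (Fin n) → ℝ}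
    (hU : ContDiff ℝ 2 U) {x₀ : EuclideanSpace ℝ (Fin n)} (hmin : IsLocalMin U x₀) :
    0 ≤ lap U x₀ := by
  refine Finset.sum_nonneg fun i _ => ?_
  rw [← deriv_deriv_comp_add_smul hU]
  have hline : Continuous fun t : ℝ => x₀ + t • EuclideanSpace.single i (1 : ℝ) := by
    fun_prop
  refine IsLocalMin.deriv_deriv_nonneg ?_ (hU.continuous.comp hline).continuousAt
  exact IsLocalMin.comp_continuous (by simpa using hmin) hline.continuousAt

theorem nonneg_of_lap_neg {n : ℕ} {Ω : Set (EuclideanSpace ℝ (Fin n))} (hΩ : IsCompact Ω)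
    {U : EuclideanSpace ℝ (Fin n) → ℝ} (hU : ContDiff ℝ 2 U)
    (hlap : ∀ x ∈ interior Ω, lap U x < 0) (hbd : ∀ x ∈ frontier Ω, U x = 0) :
    ∀ x ∈ Ω, 0 ≤ U x := by
  intro x hx
  obtain ⟨x₀, hx₀, hmin⟩ := hΩ.exists_isMinOn ⟨x, hx⟩ hU.continuous.continuousOn
  by_cases hint : x₀ ∈ interior Ω
  · exact absurd (lap_nonneg_of_isLocalMin hU (hmin.isLocalMin
      (mem_interior_iff_mem_nhds.1 hint))) (not_le.2 (hlap x₀ hint))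
  · simpa [hbd x₀ ⟨subset_closure hx₀, hint⟩] using hmin hx

theorem nonpos_of_gradient_eq_smul_of_lap_neg {n : ℕ} {Ω : Set (EuclideanSpace ℝ (Fin n))}
    (hΩc : IsCompact Ω) (hΩconv : Convex ℝ Ω) {z : EuclideanSpace ℝ (Fin n)}
    (hz : z ∈ interior Ω) {U : EuclideanSpace ℝ (Fin n) → ℝ} (hU : ContDiff ℝ 2 U)
    (hlap : ∀ x ∈ interior Ω, lap U x < 0) (hbd : ∀ x ∈ frontier Ω, U x = 0)
    {ξ p : EuclideanSpace ℝ (Fin n)} (hξ : ξ ≠ 0) (hp : p ∈ frontier Ω)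
    (hmax : ∀ y ∈ Ω, ⟪ξ, y⟫_ℝ ≤ ⟪ξ, p⟫_ℝ) {c : ℝ} (hgrad : gradient U p = c • ξ) : c ≤ 0 := by
  have hmin : IsMinOn U Ω p := isMinOn_iff.2 fun y hy => by
    rw [hbd p hp]
    exact nonneg_of_lap_neg hΩc hU hlap hbd y hy
  exact nonpos_of_gradient_eq_smul hΩconv hξ (hΩc.isClosed.frontier_subset hp) hmax hz hmin
    (hU.differentiable two_ne_zero p) hgrad

theorem card_fin_sub_one_add_one_eq_finrank {n : ℕ} {ξ : EuclideanSpace ℝ (Fin n)}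
    (hξ : ξ ≠ 0) :
    Fintype.card (Fin (n - 1)) + 1 = Module.finrank ℝ (EuclideanSpace ℝ (Fin n)) := by
  have : n ≠ 0 := by rintro rfl; exact hξ (Subsingleton.elim _ _)
  simp only [Fintype.card_fin, finrank_euclideanSpace_fin]
  omega

section SupportFunction

variable {E : Type*} [NormedAddCommGroup E] [InnerProductSpace ℝ E]

theorem mem_frontier_and_inner_le_of_ne_zero {Ω : Set E} {F : E → E}
    (hFmax : ∀ x, ‖x‖ = 1 → F x ∈ frontier Ω ∧ ∀ y ∈ Ω, ⟪x, y⟫_ℝ ≤ ⟪x, F x⟫_ℝ)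
    (hF0 : ∀ (a : ℝ), 0 < a → ∀ x, F (a • x) = F x) {x : E} (hx : x ≠ 0) :
    F x ∈ frontier Ω ∧ ∀ y ∈ Ω, ⟪x, y⟫_ℝ ≤ ⟪x, F x⟫_ℝ := by
  have hpos : 0 < ‖x‖ := norm_pos_iff.2 hx
  have hunit : ‖‖x‖⁻¹ • x‖ = 1 := by
    rw [norm_smul, norm_inv, norm_norm, inv_mul_cancel₀ hpos.ne']
  obtain ⟨hfr, hmax⟩ := hFmax _ hunit
  rw [hF0 _ (inv_pos.2 hpos)] at hfr hmax
  refine ⟨hfr, fun y hy => ?_⟩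
  have := hmax y hy
  rw [real_inner_smul_left, real_inner_smul_left] at this
  exact le_of_mul_le_mul_left this (inv_pos.2 hpos)

variable [CompleteSpace E]

theorem gradient_eq_of_isMaxOn_inner {Ω : Set E} (hΩ : IsCompact Ω) {h : E → ℝ}
    (hsupp : ∀ x, h x = sSup ((fun y => ⟪x, y⟫_ℝ) '' Ω)) {x p : E} (hp : p ∈ Ω)
    (hmax : ∀ y ∈ Ω, ⟪x, y⟫_ℝ ≤ ⟪x, p⟫_ℝ) (hd : DifferentiableAt ℝ h x) :
    gradient h x = p := by
  refine gradient_eq_of_inner_le hd (fun y => ?_) ?_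
  · rw [hsupp, real_inner_comm]
    exact le_csSup (hΩ.image (innerSL ℝ y).continuous).bddAbove ⟨p, hp, rfl⟩
  · rw [hsupp, real_inner_comm]
    exact IsGreatest.csSup_eq ⟨⟨p, hp, rfl⟩, by rintro _ ⟨y, hy, rfl⟩; exact hmax y hy⟩

theorem eq_gradient_of_ne_zero {Ω : Set E} (hΩ : IsCompact Ω) {h : E → ℝ}
    (hsupp : ∀ x, h x = sSup ((fun y => ⟪x, y⟫_ℝ) '' Ω)) {F : E → E}
    (hFmax : ∀ x, ‖x‖ = 1 → F x ∈ frontier Ω ∧ ∀ y ∈ Ω, ⟪x, y⟫_ℝ ≤ ⟪x, F x⟫_ℝ)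
    (hF0 : ∀ (a : ℝ), 0 < a → ∀ x, F (a • x) = F x) {x : E} (hx : x ≠ 0)
    (hd : DifferentiableAt ℝ h x) : F x = gradient h x := by
  obtain ⟨hfr, hmax⟩ := mem_frontier_and_inner_le_of_ne_zero hFmax hF0 hx
  exact (gradient_eq_of_isMaxOn_inner hΩ hsupp (hΩ.isClosed.frontier_subset hfr) hmax hd).symm

variable [FiniteDimensional ℝ E] {ι : Type*} [Fintype ι] {e : ι → E} {ξ : E}

theorem fderiv_gradient_apply_eq_sum (he : Orthonormal ℝ e) (hξ : ‖ξ‖ = 1)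
    (heξ : ∀ i, ⟪e i, ξ⟫_ℝ = 0) (hcard : Fintype.card ι + 1 = Module.finrank ℝ E)
    {h : E → ℝ} (hh : ContDiffAt ℝ 2 h ξ) (hrad : fderiv ℝ (gradient h) ξ ξ = 0)
    {W : Matrix ι ι ℝ} (hW : ∀ i j, W i j = iteratedFDeriv ℝ 2 h ξ ![e i, e j]) (j : ι) :
    fderiv ℝ (gradient h) ξ (e j) = ∑ k, W j k • e k := by
  have hnormal : ⟪ξ, fderiv ℝ (gradient h) ξ (e j)⟫_ℝ = 0 := by
    rw [real_inner_comm, inner_fderiv_gradient, iteratedFDeriv_two_comm hh,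
      ← inner_fderiv_gradient, hrad, inner_zero_left]
  have htangent : ∀ k, ⟪e k, fderiv ℝ (gradient h) ξ (e j)⟫_ℝ = W j k := fun k => by
    rw [real_inner_comm, inner_fderiv_gradient, hW]
  conv_lhs => rw [he.eq_inner_smul_add_sum hξ heξ hcard (fderiv ℝ (gradient h) ξ (e j))]
  simp only [hnormal, htangent, zero_smul, zero_add]

theorem gradient_eq_inner_smul_of_eventually_eq_zero [DecidableEq ι] (he : Orthonormal ℝ e)
    (hξ : ‖ξ‖ = 1) (heξ : ∀ i, ⟪e i, ξ⟫_ℝ = 0) (hcard : Fintype.card ι + 1 = Module.finrank ℝ E)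
    {F : E → E} {D : E →L[ℝ] E} (hF : HasFDerivAt F D ξ) {W : Matrix ι ι ℝ}
    (hW : W.det ≠ 0) (hD : ∀ j, D (e j) = ∑ k, W j k • e k) {U : E → ℝ}
    (hU : DifferentiableAt ℝ U (F ξ)) (hUF : ∀ᶠ x in 𝓝 ξ, U (F x) = 0) :
    gradient U (F ξ) = ⟪ξ, gradient U (F ξ)⟫_ℝ • ξ := by
  set t : ι → ℝ := fun k => ⟪e k, gradient U (F ξ)⟫_ℝ
  have hchain : (fderiv ℝ U (F ξ)).comp D = 0 :=
    (hU.hasFDerivAt.comp ξ hF).unique ((hasFDerivAt_const 0 ξ).congr_of_eventuallyEq hUF)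
  have hWt : W *ᵥ t = 0 := funext fun j => by
    have := congrArg (· (e j)) hchain
    simp only [ContinuousLinearMap.comp_apply, hD, map_sum, map_smul] at this
    simpa [Matrix.mulVec, dotProduct, t, real_inner_comm, inner_gradient] using this
  have ht : ∀ k, t k = 0 := fun k => by
    have := Matrix.sum_mulVec_mul_adjugate W t k
    simp only [hWt, Pi.zero_apply, zero_mul, Finset.sum_const_zero] at this
    exact (mul_eq_zero.1 this.symm).resolve_left hW
  conv_lhs => rw [he.eq_inner_smul_add_sum hξ heξ hcard (gradient U (F ξ))]
  simp only [t] at ht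
  simp only [ht, zero_smul, Finset.sum_const_zero, add_zero]

end SupportFunction

/-- Lemma 3.2 (iii): tangential-normal components of the Hessian of the torsion function:
`(∇²U(F(ξ)) e_i) · ξ = -κ Σ_j |∇U(F(ξ))|_j c_{ij}`, where `|∇U(F(·))|_j` is the `j`-th
covariant derivative on `S^{n-1}` of `ξ ↦ |∇U(F(ξ))|` (realized, via the 0-homogeneous
extension of `F`, as the ambient directional derivative along the tangent vector `e j`),
`κ = (det W)⁻¹` the Gauss curvature and `c = adjugate W` the cofactor matrix of the reverse
Weingarten matrix `W = (h_{ij} + h δ_{ij})`. -/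
theorem stmt_10 (n : ℕ) (Ω : Set (EuclideanSpace ℝ (Fin n)))
    (hΩc : IsCompact Ω) (hΩconv : Convex ℝ Ω) (hΩint : (interior Ω).Nonempty)
    (h : EuclideanSpace ℝ (Fin n) → ℝ)
    (hsupp : ∀ x, h x = sSup ((fun y => ⟪x, y⟫_ℝ) '' Ω))
    -- `Ω` of class `C²₊`: `h` is `C²` away from the origin,
    (hsm : ContDiffOn ℝ 2 h {x | x ≠ 0})
    (F : EuclideanSpace ℝ (Fin n) → EuclideanSpace ℝ (Fin n))
    -- `F` is the inverse Gauss map: `F x` is the boundary point with outer normal `x`: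
    (hFmax : ∀ x, ‖x‖ = 1 → F x ∈ frontier Ω ∧ ∀ y ∈ Ω, ⟪x, y⟫_ℝ ≤ ⟪x, F x⟫_ℝ)
    -- extended 0-homogeneously:
    (hF0 : ∀ (a : ℝ), 0 < a → ∀ x, F (a • x) = F x)
    (U : EuclideanSpace ℝ (Fin n) → ℝ)
    -- `U ∈ C²(closure Ω)` solves the torsion problem:
    (hUsm : ContDiff ℝ 2 U)
    (hlap : ∀ x ∈ interior Ω, lap U x = -2)
    (hbd : ∀ x ∈ frontier Ω, U x = 0)
    (ξ : EuclideanSpace ℝ (Fin n)) (hξ : ‖ξ‖ = 1)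
    -- a local orthonormal frame of the tangent space at `ξ`:
    (e : Fin (n - 1) → EuclideanSpace ℝ (Fin n)) (he : Orthonormal ℝ e)
    (heξ : ∀ i, ⟪e i, ξ⟫_ℝ = 0)
    -- the reverse Weingarten matrix `(h_{ij} + h δ_{ij})`:
    (W : Matrix (Fin (n - 1)) (Fin (n - 1)) ℝ)
    (hW : ∀ i j, W i j = iteratedFDeriv ℝ 2 h ξ ![e i, e j])
    -- `W` is positive definite (positive Gauss curvature):
    (hWpos : W.PosDef)
    (hFd : DifferentiableAt ℝ (fun x => ‖gradient U (F x)‖) ξ) :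
    ∀ i, iteratedFDeriv ℝ 2 U (F ξ) ![e i, ξ] =
      -(W.det⁻¹ * ∑ j, fderiv ℝ (fun x => ‖gradient U (F x)‖) ξ (e j) * W.adjugate i j) := by
  have hξ0 : ξ ≠ 0 := ne_zero_of_norm_ne_zero (by rw [hξ]; exact one_ne_zero)
  have hcard := card_fin_sub_one_add_one_eq_finrank hξ0
  have hnhds : {x | x ≠ 0} ∈ 𝓝 ξ := isOpen_ne.mem_nhds hξ0
  have hFsupp := fun x (hx : x ≠ 0) => mem_frontier_and_inner_le_of_ne_zero hFmax hF0 hx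
  have hh : ContDiffAt ℝ 2 h ξ := hsm.contDiffAt hnhds
  have hF : HasFDerivAt F (fderiv ℝ (gradient h) ξ) ξ := by
    refine hh.differentiableAt_gradient.hasFDerivAt.congr_of_eventuallyEq ?_
    filter_upwards [hnhds] with x hx
    exact eq_gradient_of_ne_zero hΩc hsupp hFmax hF0 hx
      ((hsm.contDiffAt (isOpen_ne.mem_nhds hx)).differentiableAt two_ne_zero)
  have hDF := fderiv_gradient_apply_eq_sum he hξ heξ hcard hh
    (hF.apply_self_eq_zero_of_smul_invariant fun a ha => hF0 a ha ξ) hW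
  have hU : DifferentiableAt ℝ U (F ξ) := hUsm.differentiable two_ne_zero _
  have hgrad := gradient_eq_inner_smul_of_eventually_eq_zero he hξ heξ hcard hF
    hWpos.det_pos.ne' hDF hU (by filter_upwards [hnhds] with x hx using hbd _ (hFsupp x hx).1)
  obtain ⟨z, hz⟩ := hΩint
  have hc := nonpos_of_gradient_eq_smul_of_lap_neg hΩc hΩconv hz hUsm
    (fun x hx => by rw [hlap x hx]; norm_num) hbd hξ0 (hFsupp ξ hξ0).1 (hFsupp ξ hξ0).2 hgrad
  have hv : HasFDerivAt (fun x => gradient U (F x))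
      ((fderiv ℝ (gradient U) (F ξ)).comp (fderiv ℝ (gradient h) ξ)) ξ :=
    hUsm.contDiffAt.differentiableAt_gradient.hasFDerivAt.comp ξ hF
  have hderiv : ∀ j, fderiv ℝ (fun x => ‖gradient U (F x)‖) ξ (e j) =
      -(W *ᵥ fun k => iteratedFDeriv ℝ 2 U (F ξ) ![e k, ξ]) j := fun j => by
    rw [fderiv_norm_apply_of_eq_smul_nonpos (v := fun x => gradient U (F x)) hξ hc hgrad hv hFd]
    simp [hDF, Matrix.mulVec, dotProduct, real_inner_comm _ ξ, sum_inner, real_inner_smul_left,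
      inner_fderiv_gradient]
  intro i
  simp_rw [hderiv, neg_mul, Finset.sum_neg_distrib, Matrix.sum_mulVec_mul_adjugate]
  field_simp [hWpos.det_pos.ne']
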